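/- arXiv:1702.08494 — 2 statements merged into one kernel-verified Lean document; each statement's English description precedes it below -/
import Mathlib

section
/- Let a single UAV route visit tasks s_1, …, s_k in order, starting and ending at the depot d, with nonnegative travel times c satisfying the triangle inequality. If the cycle length L is at most the revisit period limit R of the m-th visited task s_m, then the arrival time at s_m satisfies a_m ≤ R − c(s_m, d). (Validity of the strengthened inequality y_{ij} ≤ (R_j − c_{jd}) x_{ij} in Proposition 1.) -/
lemma path_bound {Loc : Type*} (c : Loc → Loc → ℝ) (hc : ∀ x y, 0 ≤ c x y)
    (htri : ∀ x y z, c x z ≤ c x y + c y z) (s : ℕ → Loc) (m : ℕ) :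
    ∀ j : ℕ, c (s m) (s (m + 1 + j)) ≤ ∑ l ∈ Finset.Ico m (m + 1 + j), c (s l) (s (l + 1)) := by
  intro j
  induction j with
  | zero => simp
  | succ n ih =>
      have h1 : c (s m) (s (m + 1 + (n + 1))) ≤
          c (s m) (s (m + 1 + n)) + c (s (m + 1 + n)) (s (m + 1 + n + 1)) := by
        have := htri (s m) (s (m + 1 + n)) (s (m + 1 + (n + 1)))
        simpa [Nat.add_assoc] using this
      have h2 : m + 1 + (n + 1) = (m + 1 + n) + 1 := by ring
      rw [h2, Finset.sum_Ico_succ_top (by omega : m ≤ m + 1 + n)]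
      exact h1.trans (by linarith)

/-- A single UAV route visits tasks `s 1, …, s k` in order, starting
and ending at the depot `d` (`s 0 = s (k+1) = d`), with nonnegative travel times `c`
satisfying the triangle inequality.  If the cycle length
`L = ∑_{l=0}^{k} c (s l) (s (l + 1))` is at most the revisit period limit `R` of the
m-th visited task `s m`, then the arrival time `a m = ∑_{l=0}^{m-1} c (s l) (s (l + 1))`
satisfies `a m ≤ R − c (s m) d`. -/
theorem arrival_time_upper_bound
    {Loc : Type*} (c : Loc → Loc → ℝ) (hc : ∀ x y, 0 ≤ c x y)
    (htri : ∀ x y z, c x z ≤ c x y + c y z)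
    (d : Loc) (k : ℕ) (s : ℕ → Loc)
    (hs0 : s 0 = d) (hsk : s (k + 1) = d)
    (m : ℕ) (hm1 : 1 ≤ m) (hmk : m ≤ k) (R : ℝ)
    (hL : (∑ l ∈ Finset.range (k + 1), c (s l) (s (l + 1))) ≤ R) :
    (∑ l ∈ Finset.range m, c (s l) (s (l + 1))) ≤ R - c (s m) d := by
  have hmk1 : m ≤ k + 1 := Nat.le_succ_of_le hmk
  have hsplit : (∑ l ∈ Finset.range (k + 1), c (s l) (s (l + 1)))
      = (∑ l ∈ Finset.range m, c (s l) (s (l + 1)))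
        + ∑ l ∈ Finset.Ico m (k + 1), c (s l) (s (l + 1)) := by
    rw [Finset.range_eq_Ico, ← Finset.sum_Ico_consecutive _ (Nat.zero_le m) hmk1,
      ← Finset.range_eq_Ico]
  have hpath := path_bound c hc htri s m (k - m)
  have heq : m + 1 + (k - m) = k + 1 := by omega
  rw [heq] at hpath
  rw [hsk] at hpath
  linarith
end

section
/- Let a single UAV route visit tasks s_1, …, s_k in order, starting and ending at the depot d, with nonnegative travel times c satisfying the triangle inequality. If the cycle length L is at most the revisit period limit R of the m-th visited task s_m, then the return time from s_m to the depot satisfies r_m ≤ R − c(d, s_m). (Validity of the strengthened inequality w_{ij} ≤ (R_i − c_{di}) x_{ij} in Proposition 1.) -/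
theorem le_sum_Ico_of_triangle {Loc M : Type*} [AddCommMonoid M] [PartialOrder M]
    [IsOrderedAddMonoid M] (c : Loc → Loc → M) (htri : ∀ x y z, c x z ≤ c x y + c y z)
    (s : ℕ → Loc) {a b : ℕ} (hab : a < b) :
    c (s a) (s b) ≤ ∑ l ∈ Finset.Ico a b, c (s l) (s (l + 1)) := by
  induction b, hab using Nat.le_induction with
  | base => simp
  | succ b hab ih =>
    rw [Finset.sum_Ico_succ_top (by omega)]
    exact (htri _ (s b) _).trans (add_le_add_left ih _)

theorem return_time_upper_bound_general
    {Loc : Type*} (c : Loc → Loc → ℝ)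
    (htri : ∀ x y z, c x z ≤ c x y + c y z)
    (d : Loc) (k : ℕ) (s : ℕ → Loc)
    (hs0 : s 0 = d)
    (m : ℕ) (hm1 : 1 ≤ m) (hmk : m ≤ k) (R : ℝ)
    (hL : (∑ l ∈ Finset.range (k + 1), c (s l) (s (l + 1))) ≤ R) :
    (∑ l ∈ Finset.Icc m k, c (s l) (s (l + 1))) ≤ R - c d (s m) := by
  have hsplit := Finset.sum_range_add_sum_Ico (fun l ↦ c (s l) (s (l + 1))) (by omega : m ≤ k + 1)
  have hdepot : c d (s m) ≤ ∑ l ∈ Finset.range m, c (s l) (s (l + 1)) := by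
    simpa only [hs0, Finset.range_eq_Ico] using le_sum_Ico_of_triangle c htri s hm1
  rw [Finset.Ico_add_one_right_eq_Icc] at hsplit
  linarith

/-- A single UAV route visits tasks `s 1, …, s k` in order, starting
and ending at the depot `d` (`s 0 = s (k+1) = d`), with nonnegative travel times `c`
satisfying the triangle inequality.  If the cycle length
`L = ∑_{l=0}^{k} c (s l) (s (l+1))` is at most the revisit period limit `R` of the
m-th visited task `s m`, then the return time
`r m = ∑_{l=m}^{k} c (s l) (s (l+1))` satisfies `r m ≤ R − c d (s m)`. -/
theorem return_time_upper_bound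
    {Loc : Type*} (c : Loc → Loc → ℝ) (hc : ∀ x y, 0 ≤ c x y)
    (htri : ∀ x y z, c x z ≤ c x y + c y z)
    (d : Loc) (k : ℕ) (s : ℕ → Loc)
    (hs0 : s 0 = d) (hsk : s (k + 1) = d)
    (m : ℕ) (hm1 : 1 ≤ m) (hmk : m ≤ k) (R : ℝ)
    (hL : (∑ l ∈ Finset.range (k + 1), c (s l) (s (l + 1))) ≤ R) :
    (∑ l ∈ Finset.Icc m k, c (s l) (s (l + 1))) ≤ R - c d (s m) :=
  return_time_upper_bound_general c htri d k s hs0 m hm1 hmk R hL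
end
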